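/- Every normal topometric space is completely regular: the family of continuous 1-Lipschitz functions X → ℂ separates points from closed sets and satisfies d(x,y) = sup { |f(x) − f(y)| : f continuous 1-Lipschitz } for all x, y ∈ X. -/

import Mathlib

/-!
A metric Urysohn lemma. Let `C p` be closed sets at levels `p ≤ m` and `K q` closed sets at
levels `q ≥ m`, finitely many of each, with `d(C p, K q) > q - p`. Separating by open sets
`U`, `V` the union of the closed `(m - p + δ)`-neighbourhoods of the `C p` from that of the
`(q - m + δ)`-neighbourhoods of the `K q`, normality gives a closed `D = Vᶜ` at level `m`:
`d(C p, (interior D)ᶜ) > m - p` and `d(D, K q) > q - m`.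
Starting from `F` at level `0` and `G` at level `r < d(F, G)`, and inserting a dense sequence of
levels in `[0, r)` one at a time (the upper set attached to a level being the complement of the
interior of its set), one gets closed sets `C n` for which `z ↦ inf ({r} ∪ {e n | z ∈ C n})` is
continuous, `1`-Lipschitz, `0` on `F` and `r` on `G`. Taking `F` a singleton, closed because `d`
is lower semicontinuous, gives both conditions of complete regularity.
-/

open scoped ENNReal NNReal
open Set

structure TopometricOn (X : Type*) [TopologicalSpace X] where
  d : X → X → ℝ≥0∞
  d_self : ∀ x, d x x = 0
  eq_of_d_eq_zero : ∀ x y, d x y = 0 → x = y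
  d_symm : ∀ x y, d x y = d y x
  d_triangle : ∀ x y z, d x z ≤ d x y + d y z
  lsc : LowerSemicontinuous fun p : X × X => d p.1 p.2
  refines : ∀ U : Set X, IsOpen U → ∀ x ∈ U, ∃ ε > (0 : ℝ≥0∞), ∀ y, d x y < ε → y ∈ U

namespace TopometricOn

variable {X : Type*} [TopologicalSpace X]

noncomputable def setD (T : TopometricOn X) (F G : Set X) : ℝ≥0∞ :=
  ⨅ x ∈ F, ⨅ y ∈ G, T.d x y

noncomputable def ptD (T : TopometricOn X) (x : X) (F : Set X) : ℝ≥0∞ :=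
  ⨅ y ∈ F, T.d x y

def IsNormal (T : TopometricOn X) : Prop :=
  (∀ F G : Set X, IsClosed F → IsClosed G → 0 < T.setD F G →
      ∃ U V : Set X, IsOpen U ∧ IsOpen V ∧ F ⊆ U ∧ G ⊆ V ∧ Disjoint U V) ∧
  (∀ F : Set X, IsClosed F → ∀ r : ℝ≥0∞, 0 < r → IsClosed {x | T.ptD x F ≤ r})

end TopometricOn

def TopometricOn.IsCompletelyRegular {X : Type*} [TopologicalSpace X]
    (T : TopometricOn X) : Prop :=
  (∀ F : Set X, IsClosed F → ∀ x ∉ F,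
      ∃ f : X → ℂ, Continuous f ∧ (∀ a b, edist (f a) (f b) ≤ T.d a b) ∧
        ∃ t : ℂ, (∀ y ∈ F, f y = t) ∧ f x ≠ t) ∧
  (∀ x y : X, T.d x y =
      ⨆ f : {f : X → ℂ // Continuous f ∧ ∀ a b, edist (f a) (f b) ≤ T.d a b},
        edist (f.1 x) (f.1 y))

theorem exists_seq_of_forall_exists_extend {α : Type*} (P : ℕ → α → Prop)
    (R : ℕ → ℕ → α → α → Prop) {a₀ : α} (h₀ : P 0 a₀)
    (h : ∀ n (c : ℕ → α), (∀ k ≤ n, P k (c k)) →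
      (∀ i ≤ n, ∀ j ≤ n, i ≠ j → R i j (c i) (c j)) →
      ∃ a, P (n + 1) a ∧ ∀ i ≤ n, R i (n + 1) (c i) a ∧ R (n + 1) i a (c i)) :
    ∃ c : ℕ → α, c 0 = a₀ ∧ (∀ n, P n (c n)) ∧
      Pairwise fun i j => R i j (c i) (c j) := by
  classical
  let Good (n : ℕ) (c : ℕ → α) : Prop :=
    (∀ k ≤ n, P k (c k)) ∧ ∀ i ≤ n, ∀ j ≤ n, i ≠ j → R i j (c i) (c j)
  have step : ∀ n c, Good n c → ∃ a, Good (n + 1) (Function.update c (n + 1) a) := by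
    rintro n c ⟨hP, hR⟩
    obtain ⟨a, ha, haR⟩ := h n c hP hR
    have hupd : ∀ k ≤ n, Function.update c (n + 1) a k = c k :=
      fun k hk => Function.update_of_ne (by omega) _ _
    refine ⟨a, fun k hk => ?_, fun i hi j hj hij => ?_⟩
    · rcases Nat.le_succ_iff.1 hk with hk | rfl
      · rw [hupd k hk]; exact hP k hk
      · rwa [Function.update_self]
    · rcases Nat.le_succ_iff.1 hi with hi | rfl <;> rcases Nat.le_succ_iff.1 hj with hj | rfl
      · rw [hupd i hi, hupd j hj]; exact hR i hi j hj hij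
      · rw [hupd i hi, Function.update_self]; exact (haR i hi).1
      · rw [hupd j hj, Function.update_self]; exact (haR j hj).2
      · exact absurd rfl hij
  have : Nonempty α := ⟨a₀⟩
  choose! next hnext using step
  let seq : ℕ → ℕ → α := fun n =>
    Nat.rec (fun _ => a₀) (fun n c => Function.update c (n + 1) (next n c)) n
  have hgood : ∀ n, Good n (seq n) := fun n => by
    induction n with
    | zero => exact ⟨fun k hk => by obtain rfl := Nat.le_zero.1 hk; exact h₀,
        fun i hi j hj hij => absurd ((Nat.le_zero.1 hi).trans (Nat.le_zero.1 hj).symm) hij⟩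
    | succ n ih => exact hnext n _ ih
  have hstable : ∀ n, ∀ k ≤ n, seq n k = seq k k := fun n => by
    induction n with
    | zero => intro k hk; obtain rfl := Nat.le_zero.1 hk; rfl
    | succ n ih =>
      intro k hk
      rcases Nat.le_succ_iff.1 hk with hk | rfl
      · exact (Function.update_of_ne (by omega) _ _).trans (ih k hk)
      · rfl
  refine ⟨fun n => seq n n, rfl, fun n => (hgood n).1 n le_rfl, fun i j hij => ?_⟩
  have := (hgood (max i j)).2 i (le_max_left i j) j (le_max_right i j) hij
  rwa [hstable _ i (le_max_left i j), hstable _ j (le_max_right i j)] at this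

open Filter Topology in
theorem Set.Finite.exists_pos_forall_ofReal_add_lt {ι : Type*} {I : Set ι} (hI : I.Finite)
    {a : ι → ℝ} {b : ι → ℝ≥0∞} (h : ∀ i ∈ I, ENNReal.ofReal (a i) < b i) :
    ∃ δ > 0, ∀ i ∈ I, ENNReal.ofReal (a i + δ) < b i := by
  have hsmall : ∀ i ∈ I, ∀ᶠ δ in 𝓝[>] (0 : ℝ), ENNReal.ofReal (a i + δ) < b i := fun i hi =>
    have hcont : Continuous fun δ : ℝ => ENNReal.ofReal (a i + δ) :=
      ENNReal.continuous_ofReal.comp (by fun_prop)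
    (tendsto_nhdsWithin_of_tendsto_nhds (hcont.tendsto' 0 _ (by simp))).eventually_lt_const
      (h i hi)
  obtain ⟨δ, hδ, hδ₀⟩ := ((hI.eventually_all.2 hsmall).and self_mem_nhdsWithin).exists
  exact ⟨δ, hδ₀, hδ⟩

theorem exists_seq_dense_Ico {r : ℝ} (hr : 0 < r) :
    ∃ e : ℕ → ℝ, e 0 = 0 ∧ (∀ n, e n ∈ Ico 0 r) ∧
      ∀ a ∈ Ico 0 r, ∀ b, a < b → ∃ n, e n ∈ Ioo a b := by
  obtain ⟨g, hg⟩ :=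
    ((countable_range ((↑) : ℚ → ℝ)).mono inter_subset_right).exists_eq_range
      (show (Ico 0 r ∩ range ((↑) : ℚ → ℝ)).Nonempty from ⟨0, ⟨le_rfl, hr⟩, 0, Rat.cast_zero⟩)
  have hg' : ∀ k, g k ∈ Ico 0 r := fun k => (hg.symm.subset (mem_range_self k)).1
  refine ⟨fun n => Nat.casesOn n 0 g, rfl, fun n => ?_, fun a ha b hab => ?_⟩
  · cases n with
    | zero => exact ⟨le_rfl, hr⟩
    | succ k => exact hg' k
  · obtain ⟨q, haq, hqb⟩ := exists_rat_btwn (lt_min hab ha.2)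
    obtain ⟨k, hk⟩ : (q : ℝ) ∈ range g :=
      hg ▸ ⟨⟨ha.1.trans haq.le, hqb.trans_le (min_le_right _ _)⟩, q, rfl⟩
    exact ⟨k + 1, show g k ∈ Ioo a b from hk ▸ ⟨haq, hqb.trans_le (min_le_left _ _)⟩⟩

namespace TopometricOn

section

variable {X : Type*}

noncomputable def levelFun (C : ℕ → Set X) (e : ℕ → ℝ) (r : ℝ) (z : X) : ℝ :=
  sInf (insert r (e '' {n | z ∈ C n}))

theorem levelFun_eq_of_forall_notMem {C : ℕ → Set X} {e : ℕ → ℝ} {r : ℝ} {z : X}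
    (h : ∀ n, z ∉ C n) : levelFun C e r z = r := by
  simp [levelFun, h]

end

variable {X : Type*} [TopologicalSpace X]

theorem t1Space (T : TopometricOn X) : T1Space X := by
  refine ⟨fun x => isOpen_compl_iff.1 ?_⟩
  have hcompl : ({x}ᶜ : Set X) = (fun y => T.d x y) ⁻¹' Ioi 0 := by
    ext y
    simp only [mem_compl_iff, mem_singleton_iff, mem_preimage, mem_Ioi, pos_iff_ne_zero]
    exact ⟨fun hxy h => hxy (T.eq_of_d_eq_zero x y h).symm, fun h hxy => h (hxy ▸ T.d_self x)⟩
  rw [hcompl]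
  exact (T.lsc.comp (Continuous.prodMk_right x)).isOpen_preimage 0

section

variable (T : TopometricOn X)

theorem setD_comm (s t : Set X) : T.setD s t = T.setD t s := by
  simp only [setD]
  rw [iInf₂_comm]
  simp only [T.d_symm]

theorem setD_singleton_singleton (x y : X) : T.setD {x} {y} = T.d x y := by
  simp [setD]

theorem setD_le_d {s t : Set X} {x y : X} (hx : x ∈ s) (hy : y ∈ t) : T.setD s t ≤ T.d x y :=
  (iInf₂_le x hx).trans (iInf₂_le y hy)

theorem setD_singleton_pos {F : Set X} (hF : IsClosed F) {x : X} (hx : x ∉ F) :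
    0 < T.setD {x} F := by
  obtain ⟨ε, hε, hball⟩ := T.refines Fᶜ hF.isOpen_compl x hx
  refine hε.trans_le (le_iInf₂ fun _ hx' => le_iInf₂ fun y hy => ?_)
  rw [mem_singleton_iff.1 hx']
  exact not_lt.1 fun h => hball y h hy

theorem setD_le_ptD_add_d_add_ptD (s t : Set X) (z w : X) :
    T.setD s t ≤ T.ptD z s + T.d z w + T.ptD w t := by
  simp only [setD, ptD, ENNReal.iInf_add, ENNReal.add_iInf]
  refine le_iInf₂ fun y hy => le_iInf₂ fun x hx =>
    (iInf₂_le x hx).trans (iInf₂_le_of_le y hy ?_)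
  calc T.d x y ≤ T.d x z + T.d z y := T.d_triangle x z y
    _ ≤ T.d z x + (T.d z w + T.d w y) := by rw [T.d_symm x z]; gcongr; exact T.d_triangle z w y
    _ = T.d z x + T.d z w + T.d w y := (add_assoc _ _ _).symm

theorem mem_interior_of_d_le {s t : Set X} {a : ℝ≥0∞} (hst : a < T.setD s (interior t)ᶜ)
    {z w : X} (hz : z ∈ s) (hzw : T.d z w ≤ a) : w ∈ interior t :=
  not_not.1 fun hw => (T.setD_le_d hz hw).not_gt (hzw.trans_lt hst)

def cthickening (ρ : ℝ≥0∞) (s : Set X) : Set X :=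
  {z | T.ptD z s ≤ ρ}

theorem setD_le_of_mem_cthickening {ρ ρ' : ℝ≥0∞} {s t : Set X} {z w : X}
    (hz : z ∈ T.cthickening ρ s) (hw : w ∈ T.cthickening ρ' t) :
    T.setD s t ≤ ρ + T.d z w + ρ' :=
  (T.setD_le_ptD_add_d_add_ptD s t z w).trans (by gcongr <;> assumption)

theorem ofReal_lt_setD_of_disjoint_cthickening {a δ : ℝ} (ha : 0 ≤ a) (hδ : 0 < δ)
    {s t : Set X} (h : Disjoint s (T.cthickening (ENNReal.ofReal (a + δ)) t)) :
    ENNReal.ofReal a < T.setD s t :=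
  (ENNReal.ofReal_lt_ofReal_iff'.2 ⟨by linarith, by linarith⟩).trans_le
    (le_iInf₂ fun _ hz => (not_le.1 fun hle => h.notMem_of_mem_left hz hle).le)

end

variable {T : TopometricOn X}

theorem IsNormal.exists_isClosed_interpolate (hT : T.IsNormal) {s t : Set (Set X × ℝ)}
    (hs : s.Finite) (ht : t.Finite) (hs_closed : ∀ p ∈ s, IsClosed p.1)
    (ht_closed : ∀ q ∈ t, IsClosed q.1) {m : ℝ} (hsm : ∀ p ∈ s, p.2 ≤ m)
    (htm : ∀ q ∈ t, m ≤ q.2)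
    (hgap : ∀ p ∈ s, ∀ q ∈ t, ENNReal.ofReal (q.2 - p.2) < T.setD p.1 q.1) :
    ∃ D, IsClosed D ∧ (∀ p ∈ s, ENNReal.ofReal (m - p.2) < T.setD p.1 (interior D)ᶜ) ∧
      ∀ q ∈ t, ENNReal.ofReal (q.2 - m) < T.setD D q.1 := by
  obtain ⟨δ, hδ, hgapδ⟩ := (hs.prod ht).exists_pos_forall_ofReal_add_lt
    (a := fun pq => pq.2.2 - pq.1.2) fun pq hpq => hgap _ hpq.1 _ hpq.2
  set A := ⋃ p ∈ s, T.cthickening (ENNReal.ofReal (m - p.2 + δ / 3)) p.1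
  set B := ⋃ q ∈ t, T.cthickening (ENNReal.ofReal (q.2 - m + δ / 3)) q.1
  have hA : IsClosed A := hs.isClosed_biUnion fun p hp =>
    hT.2 _ (hs_closed p hp) _ (ENNReal.ofReal_pos.2 (by linarith [hsm p hp]))
  have hB : IsClosed B := ht.isClosed_biUnion fun q hq =>
    hT.2 _ (ht_closed q hq) _ (ENNReal.ofReal_pos.2 (by linarith [htm q hq]))
  have hAB : 0 < T.setD A B := by
    refine (ENNReal.ofReal_pos.2 (by positivity : 0 < δ / 3)).trans_le
      (le_iInf₂ fun z hz => le_iInf₂ fun w hw => ?_)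
    obtain ⟨p, hp, hzp⟩ := mem_iUnion₂.1 hz
    obtain ⟨q, hq, hwq⟩ := mem_iUnion₂.1 hw
    have hpm : 0 ≤ m - p.2 := by linarith [hsm p hp]
    have hqm : 0 ≤ q.2 - m := by linarith [htm q hq]
    have hsplit : ENNReal.ofReal (q.2 - p.2 + δ) = ENNReal.ofReal (m - p.2 + δ / 3) +
        ENNReal.ofReal (δ / 3) + ENNReal.ofReal (q.2 - m + δ / 3) := by
      rw [← ENNReal.ofReal_add (by linarith) (by linarith),
        ← ENNReal.ofReal_add (by linarith) (by linarith)]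
      ring_nf
    have := (hgapδ (p, q) ⟨hp, hq⟩).trans_le (T.setD_le_of_mem_cthickening hzp hwq)
    rw [hsplit] at this
    exact (ENNReal.add_lt_add_iff_left ENNReal.ofReal_ne_top).1
      ((ENNReal.add_lt_add_iff_right ENNReal.ofReal_ne_top).1 this) |>.le
  obtain ⟨U, V, hU, hV, hAU, hBV, hUV⟩ := hT.1 A B hA hB hAB
  refine ⟨Vᶜ, hV.isClosed_compl, fun p hp => ?_, fun q hq => ?_⟩
  · have hsub : T.cthickening (ENNReal.ofReal (m - p.2 + δ / 3)) p.1 ⊆ interior Vᶜ :=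
      (subset_biUnion_of_mem hp).trans (hAU.trans (interior_maximal hUV.subset_compl_right hU))
    rw [T.setD_comm]
    exact T.ofReal_lt_setD_of_disjoint_cthickening (by linarith [hsm p hp]) (by positivity)
      (disjoint_compl_left_iff_subset.2 hsub)
  · have hsub : T.cthickening (ENNReal.ofReal (q.2 - m + δ / 3)) q.1 ⊆ V :=
      (subset_biUnion_of_mem hq).trans hBV
    exact T.ofReal_lt_setD_of_disjoint_cthickening (by linarith [htm q hq]) (by positivity)
      (disjoint_compl_left_iff_subset.2 hsub)

theorem IsNormal.exists_chain (hT : T.IsNormal) {F G : Set X} (hF : IsClosed F)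
    (hG : IsClosed G) {r : ℝ} (hFG : ENNReal.ofReal r < T.setD F G) {e : ℕ → ℝ}
    (he₀ : e 0 = 0) (her : ∀ n, e n ≤ r) :
    ∃ C : ℕ → Set X, C 0 = F ∧
      (∀ n, IsClosed (C n) ∧ ENNReal.ofReal (r - e n) < T.setD (C n) G) ∧
      ∀ i j, e i < e j → ENNReal.ofReal (e j - e i) < T.setD (C i) (interior (C j))ᶜ := by
  refine (exists_seq_of_forall_exists_extend
    (fun n D => IsClosed D ∧ ENNReal.ofReal (r - e n) < T.setD D G)
    (fun i j D D' => e i < e j → ENNReal.ofReal (e j - e i) < T.setD D (interior D')ᶜ)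
    ⟨hF, by rwa [he₀, sub_zero]⟩ ?_).imp
    fun C ⟨hC₀, hP, hR⟩ => ⟨hC₀, hP, fun i j hij => hR (ne_of_apply_ne e hij.ne) hij⟩
  intro n c hP hR
  have hfin : {i | i ≤ n}.Finite := Set.finite_Iic n
  obtain ⟨D, hD, hlow, hup⟩ := hT.exists_isClosed_interpolate (m := e (n + 1))
    (s := (fun i => (c i, e i)) '' {i | i ≤ n ∧ e i < e (n + 1)})
    (t := insert (G, r)
      ((fun j => ((interior (c j))ᶜ, e j)) '' {j | j ≤ n ∧ e (n + 1) < e j}))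
    ((hfin.subset fun _ hi => hi.1).image _)
    (((hfin.subset fun _ hj => hj.1).image _).insert _)
    (forall_mem_image.2 fun i hi => (hP i hi.1).1)
    (forall_mem_insert.2 ⟨hG, forall_mem_image.2 fun _ _ => isOpen_interior.isClosed_compl⟩)
    (forall_mem_image.2 fun i hi => hi.2.le)
    (forall_mem_insert.2 ⟨her _, forall_mem_image.2 fun j hj => hj.2.le⟩)
    (forall_mem_image.2 fun i hi => forall_mem_insert.2 ⟨(hP i hi.1).2, forall_mem_image.2
      fun j hj => hR i hi.1 j hj.1 (ne_of_apply_ne e (hi.2.trans hj.2).ne) (hi.2.trans hj.2)⟩)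
  exact ⟨D, ⟨hD, hup (G, r) (mem_insert _ _)⟩, fun i hi =>
    ⟨fun h => hlow (c i, e i) (mem_image_of_mem _ ⟨hi, h⟩), fun h =>
      hup ((interior (c i))ᶜ, e i) (mem_insert_of_mem _ (mem_image_of_mem _ ⟨hi, h⟩))⟩⟩

structure IsUrysohnChain (T : TopometricOn X) (C : ℕ → Set X) (e : ℕ → ℝ) (r : ℝ) :
    Prop where
  isClosed : ∀ n, IsClosed (C n)
  mem_Ico : ∀ n, e n ∈ Ico 0 r
  exists_mem_Ioo : ∀ a ∈ Ico 0 r, ∀ b, a < b → ∃ n, e n ∈ Ioo a b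
  gap : ∀ i j, e i < e j → ENNReal.ofReal (e j - e i) < T.setD (C i) (interior (C j))ᶜ

namespace IsUrysohnChain

variable {C : ℕ → Set X} {e : ℕ → ℝ} {r : ℝ}

theorem bddBelow (hC : T.IsUrysohnChain C e r) (z : X) :
    BddBelow (insert r (e '' {n | z ∈ C n})) :=
  ⟨0, forall_mem_insert.2 ⟨(hC.mem_Ico 0).1.trans (hC.mem_Ico 0).2.le,
    forall_mem_image.2 fun n _ => (hC.mem_Ico n).1⟩⟩

theorem levelFun_le_of_mem (hC : T.IsUrysohnChain C e r) {z : X} {n : ℕ} (hz : z ∈ C n) :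
    levelFun C e r z ≤ e n :=
  csInf_le (hC.bddBelow z) (mem_insert_of_mem _ (mem_image_of_mem _ hz))

theorem levelFun_le (hC : T.IsUrysohnChain C e r) (z : X) : levelFun C e r z ≤ r :=
  csInf_le (hC.bddBelow z) (mem_insert _ _)

theorem levelFun_nonneg (hC : T.IsUrysohnChain C e r) (z : X) : 0 ≤ levelFun C e r z :=
  le_csInf (insert_nonempty _ _) (forall_mem_insert.2 ⟨(hC.mem_Ico 0).1.trans
    (hC.mem_Ico 0).2.le, forall_mem_image.2 fun n _ => (hC.mem_Ico n).1⟩)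

theorem exists_lt_of_levelFun_lt (hC : T.IsUrysohnChain C e r) {z : X} {c : ℝ}
    (h : levelFun C e r z < c) : r < c ∨ ∃ n, z ∈ C n ∧ e n < c := by
  obtain ⟨t, ht, htc⟩ := (csInf_lt_iff (hC.bddBelow z) (insert_nonempty _ _)).1 h
  rcases ht with rfl | ⟨n, hn, rfl⟩
  exacts [Or.inl htc, Or.inr ⟨n, hn, htc⟩]

theorem mem_interior (hC : T.IsUrysohnChain C e r) {i j : ℕ} (hij : e i < e j) {z w : X}
    (hz : z ∈ C i) (hzw : T.d z w ≤ ENNReal.ofReal (e j - e i)) : w ∈ interior (C j) :=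
  T.mem_interior_of_d_le (hC.gap i j hij) hz hzw

theorem le_levelFun_of_notMem (hC : T.IsUrysohnChain C e r) {w : X} {j : ℕ} (hw : w ∉ C j) :
    e j ≤ levelFun C e r w :=
  le_csInf (insert_nonempty _ _) (forall_mem_insert.2 ⟨(hC.mem_Ico j).2.le,
    forall_mem_image.2 fun _ hn => not_lt.1 fun hnj =>
      hw (interior_subset (hC.mem_interior hnj hn ((T.d_self _).trans_le zero_le)))⟩)

theorem levelFun_lt_add (hC : T.IsUrysohnChain C e r) {z w : X} {ρ c : ℝ}
    (hzw : T.d z w < ENNReal.ofReal ρ) (hc : levelFun C e r z < c) :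
    levelFun C e r w < c + ρ := by
  have hρ : 0 < ρ := ENNReal.ofReal_pos.1 (zero_le.trans_lt hzw)
  rcases hC.exists_lt_of_levelFun_lt hc with hrc | ⟨i, hzi, hic⟩
  · linarith [hC.levelFun_le w]
  by_cases hir : e i + ρ < r
  · obtain ⟨j, hj⟩ :=
      hC.exists_mem_Ioo (e i + ρ) ⟨by linarith [(hC.mem_Ico i).1], hir⟩ (c + ρ) (by linarith)
    have hwj : w ∈ C j := interior_subset (hC.mem_interior (by linarith [hj.1]) hzi
      (hzw.le.trans (ENNReal.ofReal_le_ofReal (by linarith [hj.1]))))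
    linarith [hC.levelFun_le_of_mem hwj, hj.2]
  · linarith [hC.levelFun_le w]

theorem ofReal_levelFun_sub_le (hC : T.IsUrysohnChain C e r) (z w : X) :
    ENNReal.ofReal (levelFun C e r w - levelFun C e r z) ≤ T.d z w := by
  refine le_of_not_gt fun h => ?_
  obtain ⟨ρ, -, hzw, hρ⟩ := ENNReal.lt_iff_exists_real_btwn.1 h
  have hρ' := (ENNReal.ofReal_lt_ofReal_iff'.1 hρ).1
  obtain ⟨c, hzc, hcw⟩ :=
    exists_between (show levelFun C e r z < levelFun C e r w - ρ by linarith)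
  linarith [hC.levelFun_lt_add hzw hzc]

theorem edist_levelFun_le (hC : T.IsUrysohnChain C e r) (a b : X) :
    edist (levelFun C e r a) (levelFun C e r b) ≤ T.d a b := by
  rw [edist_dist, Real.dist_eq, abs_eq_max_neg, ENNReal.ofReal_max, neg_sub]
  exact max_le (T.d_symm a b ▸ hC.ofReal_levelFun_sub_le b a) (hC.ofReal_levelFun_sub_le a b)

theorem continuous_levelFun (hC : T.IsUrysohnChain C e r) : Continuous (levelFun C e r) := by
  rw [continuous_iff_lower_upperSemicontinuous, lowerSemicontinuous_iff_isOpen_preimage,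
    upperSemicontinuous_iff_isOpen_preimage]
  refine ⟨fun c => isOpen_iff_mem_nhds.2 fun z hz => ?_,
    fun c => isOpen_iff_mem_nhds.2 fun z hz => ?_⟩
  · rcases lt_or_ge c 0 with hc | hc
    · exact Filter.univ_mem' fun w => hc.trans_le (hC.levelFun_nonneg w)
    obtain ⟨j, hj⟩ :=
      hC.exists_mem_Ioo c ⟨hc, (mem_Ioi.1 hz).trans_le (hC.levelFun_le z)⟩ _ hz
    have hzj : z ∉ C j := fun h => (hC.levelFun_le_of_mem h).not_gt hj.2
    exact Filter.mem_of_superset ((hC.isClosed j).isOpen_compl.mem_nhds hzj)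
      fun w hw => hj.1.trans_le (hC.le_levelFun_of_notMem hw)
  · rcases hC.exists_lt_of_levelFun_lt hz with hrc | ⟨i, hzi, hic⟩
    · exact Filter.univ_mem' fun w => (hC.levelFun_le w).trans_lt hrc
    obtain ⟨j, hj⟩ := hC.exists_mem_Ioo (e i) (hC.mem_Ico i) c hic
    have hzj := hC.mem_interior hj.1 hzi ((T.d_self _).trans_le zero_le)
    exact Filter.mem_of_superset (isOpen_interior.mem_nhds hzj)
      fun w hw => (hC.levelFun_le_of_mem (interior_subset hw)).trans_lt hj.2

end IsUrysohnChain

theorem IsNormal.exists_lipschitz_urysohn (hT : T.IsNormal) {F G : Set X} (hF : IsClosed F)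
    (hG : IsClosed G) {r : ℝ} (hr : 0 < r) (hFG : ENNReal.ofReal r < T.setD F G) :
    ∃ f : X → ℝ, Continuous f ∧ (∀ a b, edist (f a) (f b) ≤ T.d a b) ∧
      EqOn f 0 F ∧ EqOn f (fun _ => r) G := by
  obtain ⟨e, he₀, he, hdense⟩ := exists_seq_dense_Ico hr
  obtain ⟨C, hC₀, hCG, hgap⟩ := hT.exists_chain hF hG hFG he₀ fun n => (he n).2.le
  have hC : T.IsUrysohnChain C e r := ⟨fun n => (hCG n).1, he, hdense, hgap⟩
  refine ⟨levelFun C e r, hC.continuous_levelFun, hC.edist_levelFun_le, fun z hz => ?_,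
    fun z hz => levelFun_eq_of_forall_notMem fun n hn => ?_⟩
  · exact le_antisymm ((hC.levelFun_le_of_mem (hC₀ ▸ hz)).trans_eq he₀)
      (hC.levelFun_nonneg z)
  · exact (hCG n).2.not_ge (((T.setD_le_d hn hz).trans_eq (T.d_self z)).trans zero_le)

theorem IsNormal.exists_complex_lipschitz_urysohn (hT : T.IsNormal) {F G : Set X}
    (hF : IsClosed F) (hG : IsClosed G) {r : ℝ} (hr : 0 < r)
    (hFG : ENNReal.ofReal r < T.setD F G) :
    ∃ f : X → ℂ, Continuous f ∧ (∀ a b, edist (f a) (f b) ≤ T.d a b) ∧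
      EqOn f 0 F ∧ EqOn f (fun _ => (r : ℂ)) G := by
  obtain ⟨f, hf, hfd, hfF, hfG⟩ := hT.exists_lipschitz_urysohn hF hG hr hFG
  refine ⟨fun z => f z, Complex.continuous_ofReal.comp hf, fun a b => ?_,
    fun z hz => by simp [hfF hz], fun z hz => by simp [hfG hz]⟩
  rw [Complex.isometry_ofReal.edist_eq]
  exact hfd a b

end TopometricOn

/-- every normal topometric space is completely regular. -/
theorem isCompletelyRegular_of_isNormal {X : Type*} [TopologicalSpace X]
    (T : TopometricOn X) (hT : T.IsNormal) : T.IsCompletelyRegular := by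
  have : T1Space X := T.t1Space
  refine ⟨fun F hF x hx => ?_, fun x y => ?_⟩
  · obtain ⟨ρ, -, hρ, hρF⟩ := ENNReal.lt_iff_exists_real_btwn.1 (T.setD_singleton_pos hF hx)
    have hρ₀ : 0 < ρ := ENNReal.ofReal_pos.1 hρ
    obtain ⟨f, hf, hfd, hfx, hfF⟩ :=
      hT.exists_complex_lipschitz_urysohn isClosed_singleton hF hρ₀ hρF
    have hfx' : f x = 0 := hfx rfl
    exact ⟨f, hf, hfd, ρ, hfF, by rw [hfx']; exact_mod_cast hρ₀.ne⟩
  · refine le_antisymm (le_of_forall_lt fun w hw => ?_) (iSup_le fun f => f.2.2 x y)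
    obtain ⟨ρ, -, hwρ, hρ⟩ := ENNReal.lt_iff_exists_real_btwn.1 hw
    have hρ₀ : 0 < ρ := ENNReal.ofReal_pos.1 (zero_le.trans_lt hwρ)
    rw [← T.setD_singleton_singleton] at hρ
    obtain ⟨f, hf, hfd, hfx, hfy⟩ :=
      hT.exists_complex_lipschitz_urysohn isClosed_singleton isClosed_singleton hρ₀ hρ
    calc w < ENNReal.ofReal ρ := hwρ
      _ = edist (f x) (f y) := by
        rw [hfx rfl, hfy rfl, edist_comm, edist_dist, Complex.dist_eq]
        simp [abs_of_pos hρ₀]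
      _ ≤ _ := le_iSup (fun f : {f : X → ℂ // _} => edist (f.1 x) (f.1 y)) ⟨f, hf, hfd⟩
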